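/- arXiv:0910.0984 — 5 statements merged into one kernel-verified Lean document; each statement's English description precedes it below -/
import Mathlib

section
/- There exists an absolute constant c > 0 such that for all k, w ∈ ℝ, all V ≥ 0 and all J ≥ √V, one has |√2·w·sign(k) − [(½(k+w)² + V)^{1/2} − (½(k−w)² + V)^{1/2}]|² ≤ 2·w²·1[|w| > J] + c·J·[(½(k+w)² + V)^{1/2} + (½(k−w)² + V)^{1/2} − 2·(½k² + V)^{1/2}]. -/
/-!
Put `a = √(2V)`: each square root is `hypot x a / √2` with `hypot x a = √(x² + a²)`, and the two
sides are governed by the defect `T = 2w sign k - (P - Q)` and the second difference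
`D = P + Q - 2R`, where `P, Q, R = hypot (k + w) a, hypot (k - w) a, hypot k a`. By symmetry `k > 0` and `w ≥ 0`, and then
`0 ≤ T ≤ 2w`, which settles the case `|w| > J`; otherwise it suffices that `T² ≤ C max(w, a) D`.
If `w - k ≥ 2a` this follows from `T ≤ 3D`, a consequence of `|x| ≤ hypot x a ≤ |x| + a`.
If `w - k < 2a`, the identities `T (P + Q) = 2w (P + Q - 2k)` and
`D (P + Q + 2R) (PQ + k² - w² + a²) = 8a²w²` show that `T` is of size `w a² / (PQ)` while `D`
is at least of size `a² w² / ((P + Q) PQ)`, and `a (P + Q) ≤ 2PQ` gives `T² ≤ C a D`.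
-/

noncomputable def hypot (x a : ℝ) : ℝ := √(x ^ 2 + a ^ 2)

section Hypot

variable (x a : ℝ)

lemma hypot_nonneg : 0 ≤ hypot x a := Real.sqrt_nonneg _

lemma sq_hypot : hypot x a ^ 2 = x ^ 2 + a ^ 2 := Real.sq_sqrt (by positivity)

lemma hypot_neg : hypot (-x) a = hypot x a := by simp [hypot]

lemma abs_le_hypot : |x| ≤ hypot x a := Real.abs_le_sqrt (by nlinarith)

lemma abs_le_hypot_right : |a| ≤ hypot x a := Real.abs_le_sqrt (by nlinarith)

lemma hypot_le_abs_add_abs : hypot x a ≤ |x| + |a| :=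
  Real.sqrt_le_iff.mpr
    ⟨by positivity, by nlinarith [sq_abs x, sq_abs a, abs_nonneg x, abs_nonneg a]⟩

variable {x a} in
lemma hypot_le_hypot {y : ℝ} (h : |x| ≤ |y|) : hypot x a ≤ hypot y a :=
  Real.sqrt_le_sqrt (by nlinarith [sq_abs x, sq_abs y, abs_nonneg x])

variable {x a} in
lemma hypot_sub_mul_hypot_le (ha : 0 ≤ a) (hx : -2 * a ≤ x) :
    (hypot x a - x) * hypot x a ≤ 11 * a ^ 2 := by
  have hH := sq_hypot x a
  have hxH := abs_le_hypot x a
  have hHa := hypot_le_abs_add_abs x a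
  rw [abs_of_nonneg ha] at hHa
  rcases le_or_gt 0 x with hx0 | hx0
  · rw [abs_of_nonneg hx0] at hxH
    nlinarith
  · rw [abs_of_neg hx0] at hxH hHa
    nlinarith

end Hypot

section SecondDiff

variable (a k w : ℝ)

lemma sq_hypot_add_mul_hypot_sub :
    (hypot (k + w) a * hypot (k - w) a) ^ 2 = (k ^ 2 - w ^ 2 + a ^ 2) ^ 2 + (2 * a * w) ^ 2 := by
  rw [mul_pow, sq_hypot, sq_hypot]; ring

lemma abs_le_hypot_add_mul_hypot_sub :
    |k ^ 2 - w ^ 2 + a ^ 2| ≤ hypot (k + w) a * hypot (k - w) a :=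
  abs_le_of_sq_le_sq (by nlinarith [sq_hypot_add_mul_hypot_sub a k w])
    (mul_nonneg (hypot_nonneg _ _) (hypot_nonneg _ _))

noncomputable def secondDiff : ℝ := hypot (k + w) a + hypot (k - w) a - 2 * hypot k a

lemma secondDiff_mul :
    secondDiff a k w * (hypot (k + w) a + hypot (k - w) a + 2 * hypot k a) =
      2 * (hypot (k + w) a * hypot (k - w) a - (k ^ 2 - w ^ 2 + a ^ 2)) := by
  rw [secondDiff]
  linear_combination sq_hypot (k + w) a + sq_hypot (k - w) a - 4 * sq_hypot k a

lemma secondDiff_nonneg : 0 ≤ secondDiff a k w := by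
  have hsq : (2 * hypot k a) ^ 2 ≤ (hypot (k + w) a + hypot (k - w) a) ^ 2 := by
    nlinarith [sq_hypot (k + w) a, sq_hypot (k - w) a, sq_hypot k a,
      le_abs_self (k ^ 2 - w ^ 2 + a ^ 2), abs_le_hypot_add_mul_hypot_sub a k w]
  have := le_of_pow_le_pow_left₀ two_ne_zero
    (add_nonneg (hypot_nonneg (k + w) a) (hypot_nonneg (k - w) a)) hsq
  rw [secondDiff]; linarith

lemma secondDiff_neg_left : secondDiff a (-k) w = secondDiff a k w := by
  rw [secondDiff, secondDiff, ← hypot_neg (-k + w), ← hypot_neg (-k - w), ← hypot_neg (-k)]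
  ring_nf

lemma secondDiff_neg_right : secondDiff a k (-w) = secondDiff a k w := by
  rw [secondDiff, secondDiff, sub_neg_eq_add, ← sub_eq_add_neg]; ring

lemma secondDiff_mul_mul :
    secondDiff a k w * (hypot (k + w) a + hypot (k - w) a + 2 * hypot k a) *
      (hypot (k + w) a * hypot (k - w) a + (k ^ 2 - w ^ 2 + a ^ 2)) = 8 * a ^ 2 * w ^ 2 := by
  rw [secondDiff_mul]
  linear_combination 2 * sq_hypot_add_mul_hypot_sub a k w

lemma sq_mul_sq_le_secondDiff_mul :
    2 * a ^ 2 * w ^ 2 ≤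
      secondDiff a k w * (hypot (k + w) a + hypot (k - w) a) *
        (hypot (k + w) a * hypot (k - w) a) := by
  have hD := secondDiff_nonneg a k w
  have hm := abs_le_hypot_add_mul_hypot_sub a k w
  have hsum : hypot (k + w) a + hypot (k - w) a + 2 * hypot k a ≤
      2 * (hypot (k + w) a + hypot (k - w) a) := by
    rw [secondDiff] at hD; linarith
  have hprod : hypot (k + w) a * hypot (k - w) a + (k ^ 2 - w ^ 2 + a ^ 2) ≤
      2 * (hypot (k + w) a * hypot (k - w) a) := by
    linarith [le_abs_self (k ^ 2 - w ^ 2 + a ^ 2)]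
  have h1 := mul_le_mul hsum hprod (by linarith [neg_abs_le (k ^ 2 - w ^ 2 + a ^ 2)])
    (by linarith [hypot_nonneg (k + w) a, hypot_nonneg (k - w) a])
  have h2 := mul_le_mul_of_nonneg_left h1 hD
  linarith [secondDiff_mul_mul a k w]

end SecondDiff

section JumpDefect

variable (a k w : ℝ)

noncomputable def jumpDefect : ℝ :=
  2 * w * Real.sign k - (hypot (k + w) a - hypot (k - w) a)

lemma jumpDefect_zero_left : jumpDefect a 0 w = 0 := by
  rw [jumpDefect, Real.sign_zero, zero_add, zero_sub, hypot_neg]; ring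

lemma jumpDefect_neg_left : jumpDefect a (-k) w = -jumpDefect a k w := by
  rw [jumpDefect, jumpDefect, Real.sign_neg, ← hypot_neg (-k + w), ← hypot_neg (-k - w)]
  ring_nf

lemma jumpDefect_neg_right : jumpDefect a k (-w) = -jumpDefect a k w := by
  rw [jumpDefect, jumpDefect, sub_neg_eq_add, ← sub_eq_add_neg]; ring

variable {a k w}

lemma jumpDefect_of_pos (hk : 0 < k) :
    jumpDefect a k w = 2 * w - (hypot (k + w) a - hypot (k - w) a) := by
  rw [jumpDefect, Real.sign_of_pos hk, mul_one]

lemma jumpDefect_mul (hk : 0 < k) :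
    jumpDefect a k w * (hypot (k + w) a + hypot (k - w) a) =
      2 * w * (hypot (k + w) a + hypot (k - w) a - 2 * k) := by
  rw [jumpDefect_of_pos hk]
  linear_combination sq_hypot (k - w) a - sq_hypot (k + w) a

lemma jumpDefect_nonneg (hk : 0 < k) (hw : 0 ≤ w) : 0 ≤ jumpDefect a k w := by
  have hP : k + w ≤ hypot (k + w) a := (le_abs_self _).trans (abs_le_hypot _ _)
  have hQ : k - w ≤ hypot (k - w) a := (le_abs_self _).trans (abs_le_hypot _ _)
  refine nonneg_of_mul_nonneg_left ?_ (by linarith : 0 < hypot (k + w) a + hypot (k - w) a)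
  rw [jumpDefect_mul hk]
  exact mul_nonneg (by linarith) (by linarith)

lemma jumpDefect_le (hk : 0 < k) (hw : 0 ≤ w) : jumpDefect a k w ≤ 2 * w := by
  have hQP : hypot (k - w) a ≤ hypot (k + w) a :=
    hypot_le_hypot <| by
      rw [abs_of_nonneg (by linarith : 0 ≤ k + w)]; exact abs_le.mpr ⟨by linarith, by linarith⟩
  rw [jumpDefect_of_pos hk]; linarith

lemma jumpDefect_le_secondDiff (ha : 0 ≤ a) (hk : 0 < k) (h : 2 * a ≤ w - k) :
    jumpDefect a k w ≤ 3 * secondDiff a k w := by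
  have hP : k + w ≤ hypot (k + w) a := (le_abs_self _).trans (abs_le_hypot _ _)
  have hQ : w - k ≤ hypot (k - w) a := by linarith [neg_le_abs (k - w), abs_le_hypot (k - w) a]
  have hQ' := hypot_le_abs_add_abs (k - w) a
  have hR := hypot_le_abs_add_abs k a
  rw [abs_of_nonpos (by linarith : k - w ≤ 0), abs_of_nonneg ha] at hQ'
  rw [abs_of_pos hk, abs_of_nonneg ha] at hR
  rw [jumpDefect_of_pos hk, secondDiff]
  linarith

lemma jumpDefect_mul_hypot_mul_hypot_le (ha : 0 ≤ a) (hk : 0 < k) (hw : 0 ≤ w)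
    (h : w - k < 2 * a) :
    jumpDefect a k w * (hypot (k + w) a * hypot (k - w) a) ≤ 22 * a ^ 2 * w := by
  set P := hypot (k + w) a
  set Q := hypot (k - w) a
  have hP : 0 < P := by linarith [le_abs_self (k + w), abs_le_hypot (k + w) a]
  have hQ : 0 ≤ Q := hypot_nonneg _ _
  have hPx := mul_le_mul_of_nonneg_right
    (hypot_sub_mul_hypot_le ha (by linarith : -2 * a ≤ k + w)) hQ
  have hQy := mul_le_mul_of_nonneg_right
    (hypot_sub_mul_hypot_le ha (by linarith : -2 * a ≤ k - w)) hP.le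
  have hexcess : (P + Q - 2 * k) * (P * Q) ≤ 11 * a ^ 2 * (P + Q) := by linarith
  have hPQ : 0 < P + Q := by linarith
  refine le_of_mul_le_mul_right ?_ hPQ
  calc jumpDefect a k w * (P * Q) * (P + Q)
      = 2 * w * ((P + Q - 2 * k) * (P * Q)) := by
        linear_combination P * Q * jumpDefect_mul (a := a) (w := w) hk
    _ ≤ 2 * w * (11 * a ^ 2 * (P + Q)) := mul_le_mul_of_nonneg_left hexcess (by linarith)
    _ = 22 * a ^ 2 * w * (P + Q) := by ring

lemma jumpDefect_sq_le_of_sub_lt (ha : 0 ≤ a) (hk : 0 < k) (hw : 0 ≤ w) (h : w - k < 2 * a) :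
    jumpDefect a k w ^ 2 ≤ 484 * a * secondDiff a k w := by
  set P := hypot (k + w) a
  set Q := hypot (k - w) a
  have hPa : a ≤ P := by simpa [abs_of_nonneg ha] using abs_le_hypot_right (k + w) a
  have hQa : a ≤ Q := by simpa [abs_of_nonneg ha] using abs_le_hypot_right (k - w) a
  have hQ : 0 < Q := by linarith [le_abs_self (k - w), abs_le_hypot (k - w) a]
  have hP : 0 < P := by linarith [le_abs_self (k + w), abs_le_hypot (k + w) a]
  have hPQ : 0 < P * Q := mul_pos hP hQ
  have hT := jumpDefect_mul_hypot_mul_hypot_le ha hk hw h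
  have hT0 := jumpDefect_nonneg (a := a) hk hw
  have hD := sq_mul_sq_le_secondDiff_mul a k w
  have hD0 := secondDiff_nonneg a k w
  have has : a * (P + Q) ≤ 2 * (P * Q) := by nlinarith
  refine le_of_mul_le_mul_right ?_ (pow_pos hPQ 2)
  calc jumpDefect a k w ^ 2 * (P * Q) ^ 2 = (jumpDefect a k w * (P * Q)) ^ 2 := by ring
    _ ≤ (22 * a ^ 2 * w) ^ 2 := pow_le_pow_left₀ (mul_nonneg hT0 hPQ.le) hT 2
    _ = 242 * a ^ 2 * (2 * a ^ 2 * w ^ 2) := by ring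
    _ ≤ 242 * a ^ 2 * (secondDiff a k w * (P + Q) * (P * Q)) := by gcongr
    _ = 242 * a * secondDiff a k w * (P * Q) * (a * (P + Q)) := by ring
    _ ≤ 242 * a * secondDiff a k w * (P * Q) * (2 * (P * Q)) := by gcongr
    _ = 484 * a * secondDiff a k w * (P * Q) ^ 2 := by ring

lemma jumpDefect_sq_le_of_pos (ha : 0 ≤ a) (hk : 0 < k) (hw : 0 ≤ w) :
    jumpDefect a k w ^ 2 ≤ 484 * max w a * secondDiff a k w := by
  have hD0 := secondDiff_nonneg a k w
  rcases le_or_gt (2 * a) (w - k) with h | h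
  · have hT0 := jumpDefect_nonneg (a := a) hk hw
    calc jumpDefect a k w ^ 2 = jumpDefect a k w * jumpDefect a k w := sq _
      _ ≤ 3 * secondDiff a k w * (2 * w) :=
        mul_le_mul (jumpDefect_le_secondDiff ha hk h) (jumpDefect_le hk hw) hT0 (by positivity)
      _ ≤ 484 * max w a * secondDiff a k w := by nlinarith [le_max_left w a]
  · calc jumpDefect a k w ^ 2 ≤ 484 * a * secondDiff a k w :=
          jumpDefect_sq_le_of_sub_lt ha hk hw h
      _ ≤ 484 * max w a * secondDiff a k w := by gcongr; exact le_max_right w a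

variable (a k w)

lemma sq_jumpDefect_abs : jumpDefect a |k| |w| ^ 2 = jumpDefect a k w ^ 2 := by
  rcases abs_choice k with hk | hk <;> rcases abs_choice w with hw | hw <;>
    simp only [hk, hw, jumpDefect_neg_left, jumpDefect_neg_right, neg_sq]

lemma secondDiff_abs : secondDiff a |k| |w| = secondDiff a k w := by
  rcases abs_choice k with hk | hk <;> rcases abs_choice w with hw | hw <;>
    simp only [hk, hw, secondDiff_neg_left, secondDiff_neg_right]

lemma jumpDefect_sq_le_four_mul_sq : jumpDefect a k w ^ 2 ≤ 4 * w ^ 2 := by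
  rw [← sq_jumpDefect_abs, ← sq_abs w]
  rcases (abs_nonneg k).eq_or_lt with hk | hk
  · rw [← hk, jumpDefect_zero_left, zero_pow two_ne_zero]; positivity
  · have h0 := jumpDefect_nonneg (a := a) hk (abs_nonneg w)
    have h2 := jumpDefect_le (a := a) hk (abs_nonneg w)
    nlinarith

variable {a} in
lemma jumpDefect_sq_le (ha : 0 ≤ a) :
    jumpDefect a k w ^ 2 ≤ 484 * max |w| a * secondDiff a k w := by
  rw [← sq_jumpDefect_abs, ← secondDiff_abs]
  rcases (abs_nonneg k).eq_or_lt with hk | hk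
  · rw [← hk, jumpDefect_zero_left, zero_pow two_ne_zero]
    exact mul_nonneg (by positivity) (secondDiff_nonneg a 0 |w|)
  · exact jumpDefect_sq_le_of_pos ha hk (abs_nonneg w)

end JumpDefect

lemma sqrt_sq_div_two_add {V : ℝ} (hV : 0 ≤ V) (x : ℝ) :
    √(x ^ 2 / 2 + V) = hypot x √(2 * V) / √2 := by
  rw [hypot, Real.sq_sqrt (by positivity), ← Real.sqrt_div' _ zero_le_two]
  ring_nf

/-- There is an absolute constant `c > 0` comparing the jump of the signed momentum
with the jump of the square root of the energy `½k² + V`. -/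
theorem energy_jump_comparison :
    ∃ c : ℝ, 0 < c ∧ ∀ (k w V J : ℝ), 0 ≤ V → Real.sqrt V ≤ J →
      |Real.sqrt 2 * w * Real.sign k -
          (Real.sqrt ((k + w) ^ 2 / 2 + V) - Real.sqrt ((k - w) ^ 2 / 2 + V))| ^ 2
        ≤ 2 * w ^ 2 * (if J < |w| then (1 : ℝ) else 0) +
          c * J * (Real.sqrt ((k + w) ^ 2 / 2 + V) + Real.sqrt ((k - w) ^ 2 / 2 + V)
            - 2 * Real.sqrt (k ^ 2 / 2 + V)) := by
  refine ⟨484, by norm_num, fun k w V J hV hJ => ?_⟩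
  simp only [sqrt_sq_div_two_add hV]
  set a := √(2 * V) with ha_def
  have hs : √2 ^ 2 = 2 := Real.sq_sqrt zero_le_two
  have hs0 : 0 < √2 := by positivity
  have hT : √2 * w * Real.sign k - (hypot (k + w) a / √2 - hypot (k - w) a / √2) =
      jumpDefect a k w / √2 := by
    rw [jumpDefect]; field_simp; rw [hs]; ring
  have hD : hypot (k + w) a / √2 + hypot (k - w) a / √2 - 2 * (hypot k a / √2) =
      secondDiff a k w / √2 := by
    rw [secondDiff]; ring
  have hJ0 : 0 ≤ J := (Real.sqrt_nonneg V).trans hJ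
  have hD0 := secondDiff_nonneg a k w
  rw [hT, hD, sq_abs, div_pow, hs]
  split_ifs with hwJ
  · nlinarith [jumpDefect_sq_le_four_mul_sq a k w, mul_nonneg hJ0 (div_nonneg hD0 hs0.le)]
  · have ha : a ≤ √2 * J := by
      rw [ha_def, Real.sqrt_mul zero_le_two]; exact mul_le_mul_of_nonneg_left hJ hs0.le
    have hmax : max |w| a ≤ √2 * J :=
      max_le (by nlinarith [Real.one_lt_sqrt_two]) ha
    calc jumpDefect a k w ^ 2 / 2 ≤ 484 * max |w| a * secondDiff a k w / 2 := by
          gcongr; exact jumpDefect_sq_le k w (Real.sqrt_nonneg _)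
      _ ≤ 484 * (√2 * J) * secondDiff a k w / 2 := by gcongr
      _ = 2 * w ^ 2 * 0 + 484 * J * (secondDiff a k w / √2) := by field_simp; rw [hs]; ring
end

section
/- There exists W > 0 such that for all k, w ∈ ℝ with |w| ≥ W, one has max(|w| − |k|, 0) < √((k+w)² + 1) + √((k−w)² + 1) − 2·√(k² + 1). -/
/-!
Write `f x = √(x² + 1)`. The second difference is positive for `w ≠ 0` because `f` is strictly
convex: `f (k + w) * f (k - w) = √((k² + 1 - w²)² + 4w²) > k² + 1 - w²`, which after squaring is
`2 f k < f (k + w) + f (k - w)`. For the linear bound use `f x ≥ max |x| 1`. If `|k| ≥ 1` then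
`f k < |k| + 1/2` and `f (k + w) + f (k - w) ≥ max |k + w| |k - w| + 1 = |k| + |w| + 1`.
If `|k| < 1` then `f k ≤ |k| + 1` and `f (k + w) + f (k - w) ≥ |k + w| + |k - w| ≥ 2|w|`,
which wins once `|w| ≥ 3`.
-/

open Real

lemma abs_add_abs_le_max_abs_add_abs_sub (a b : ℝ) : |a| + |b| ≤ max |a + b| |a - b| := by
  cases abs_cases a <;> cases abs_cases b <;> cases abs_cases (a + b) <;> cases abs_cases (a - b) <;>
    simp only [le_max_iff] <;> first | (left; linarith) | (right; linarith)

lemma abs_le_sqrt_sq_add_one (x : ℝ) : |x| ≤ √(x ^ 2 + 1) := by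
  rw [← sqrt_sq_eq_abs]; exact sqrt_le_sqrt (by linarith)

lemma one_le_sqrt_sq_add_one (x : ℝ) : 1 ≤ √(x ^ 2 + 1) :=
  one_le_sqrt.2 (le_add_of_nonneg_left (sq_nonneg x))

lemma sqrt_sq_add_one_le_abs_add_one (x : ℝ) : √(x ^ 2 + 1) ≤ |x| + 1 := by
  rw [sqrt_le_left (by positivity)]; nlinarith [sq_abs x, abs_nonneg x]

lemma sqrt_sq_add_one_lt_abs_add_half {x : ℝ} (hx : 1 ≤ |x|) : √(x ^ 2 + 1) < |x| + 1 / 2 := by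
  rw [sqrt_lt' (by positivity)]; nlinarith [sq_abs x]

lemma two_mul_sqrt_sq_add_one_lt {w : ℝ} (hw : w ≠ 0) (k : ℝ) :
    2 * √(k ^ 2 + 1) < √((k + w) ^ 2 + 1) + √((k - w) ^ 2 + 1) := by
  have hprod : k ^ 2 + 1 - w ^ 2 < √((k + w) ^ 2 + 1) * √((k - w) ^ 2 + 1) := by
    have hsq : ((k + w) ^ 2 + 1) * ((k - w) ^ 2 + 1) = (k ^ 2 + 1 - w ^ 2) ^ 2 + 4 * w ^ 2 := by
      ring
    calc k ^ 2 + 1 - w ^ 2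
        ≤ √((k ^ 2 + 1 - w ^ 2) ^ 2) := by rw [sqrt_sq_eq_abs]; exact le_abs_self _
      _ < √((k ^ 2 + 1 - w ^ 2) ^ 2 + 4 * w ^ 2) :=
        sqrt_lt_sqrt (sq_nonneg _) (by linarith [pow_pos (abs_pos.2 hw) 2, sq_abs w])
      _ = _ := by rw [← hsq, sqrt_mul (by positivity)]
  refine lt_of_pow_lt_pow_left₀ 2 (by positivity) ?_
  nlinarith [sq_sqrt (show 0 ≤ (k + w) ^ 2 + 1 by positivity),
    sq_sqrt (show 0 ≤ (k - w) ^ 2 + 1 by positivity), sq_sqrt (show 0 ≤ k ^ 2 + 1 by positivity)]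

/-- For `|w|` large enough (uniformly in `k`), `max(|w| − |k|, 0)` is strictly below the
symmetrized second difference of `f(x) = √(x² + 1)`. -/
theorem linear_lt_second_difference :
    ∃ W : ℝ, 0 < W ∧ ∀ k w : ℝ, W ≤ |w| →
      max (|w| - |k|) 0
        < Real.sqrt ((k + w) ^ 2 + 1) + Real.sqrt ((k - w) ^ 2 + 1)
            - 2 * Real.sqrt (k ^ 2 + 1) := by
  refine ⟨3, by norm_num, fun k w hw => max_lt ?_ ?_⟩
  · have hp := abs_le_sqrt_sq_add_one (k + w)
    have hm := abs_le_sqrt_sq_add_one (k - w)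
    rcases le_or_gt 1 |k| with hk | hk
    · have hmax := abs_add_abs_le_max_abs_add_abs_sub k w
      have hf := sqrt_sq_add_one_lt_abs_add_half hk
      have hp1 := one_le_sqrt_sq_add_one (k + w)
      have hm1 := one_le_sqrt_sq_add_one (k - w)
      rcases le_max_iff.1 hmax with h | h <;> linarith
    · have htri : |w + w| ≤ |k + w| + |k - w| := by
        simpa only [add_sub_sub_cancel] using abs_sub (k + w) (k - w)
      have hf := sqrt_sq_add_one_le_abs_add_one k
      rw [← two_mul, abs_mul, abs_two] at htri
      linarith
  · linarith [two_mul_sqrt_sq_add_one_lt (abs_pos.1 (by linarith)) k]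
end

section
/- For all k, w ∈ ℝ one has √((k+w)² + 1) + √((k−w)² + 1) − 2·√(k² + 1) ≥ (1/2)·w²/((|k| + |w|)² + 1)^{3/2}. -/
/-!
The second derivative of `f x = √(x² + 1)` is `(x² + 1)^(-3/2)`, which on `[k - |w|, k + |w|]`
is at least `c = ((|k| + |w|)² + 1)^(-3/2)`. Hence `f x - c x² / 2` is convex there, and
comparing its values at `k ± w` with the value at the midpoint `k` gives
`f (k + w) + f (k - w) - 2 f k ≥ c w²`, twice the claimed bound.
-/

open Real Set

theorem le_second_difference_of_le_deriv2 {f f' f'' : ℝ → ℝ} {c k w : ℝ}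
    (hf : ∀ x ∈ Icc (k - |w|) (k + |w|), HasDerivAt f (f' x) x)
    (hf' : ∀ x ∈ Icc (k - |w|) (k + |w|), HasDerivAt f' (f'' x) x)
    (hc : ∀ x ∈ Icc (k - |w|) (k + |w|), c ≤ f'' x) :
    c * w ^ 2 ≤ f (k + w) + f (k - w) - 2 * f k := by
  set D := Icc (k - |w|) (k + |w|)
  have hint : interior D ⊆ D := interior_subset
  have hconv : ConvexOn ℝ D (fun x ↦ f x - c / 2 * x ^ 2) := by
    refine convexOn_of_hasDerivWithinAt2_nonneg (convex_Icc _ _) (f' := fun x ↦ f' x - c * x)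
      (f'' := fun x ↦ f'' x - c) ?_ (fun x hx ↦ ?_) (fun x hx ↦ ?_) (fun x hx ↦ ?_)
    · exact fun x hx ↦ ((hf x hx).continuousAt.sub (by fun_prop)).continuousWithinAt
    · exact ((hf x (hint hx)).sub ((hasDerivAt_pow 2 x).const_mul (c / 2))).hasDerivWithinAt
        |>.congr_deriv (by ring)
    · exact ((hf' x (hint hx)).sub ((hasDerivAt_id' x).const_mul c)).hasDerivWithinAt.congr_deriv
        (by ring)
    · exact sub_nonneg.2 (hc x (hint hx))
  have hmem : ∀ {v : ℝ}, |v| ≤ |w| → k + v ∈ D := fun {v} hv ↦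
    ⟨by linarith [neg_abs_le v], by linarith [le_abs_self v]⟩
  have hmid := hconv.2 (hmem le_rfl) (hmem (abs_neg w).le) (by norm_num : (0 : ℝ) ≤ 1 / 2)
    (by norm_num : (0 : ℝ) ≤ 1 / 2) (by norm_num)
  have hk : (1 / 2 : ℝ) • (k + w) + (1 / 2 : ℝ) • (k + -w) = k := by
    simp only [smul_eq_mul]; ring
  rw [hk] at hmid
  simp only [smul_eq_mul, ← sub_eq_add_neg] at hmid
  linear_combination 2 * hmid

theorem hasDerivAt_sqrt_sq_add_one (x : ℝ) :
    HasDerivAt (fun x ↦ √(x ^ 2 + 1)) (x / √(x ^ 2 + 1)) x := by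
  convert ((hasDerivAt_pow 2 x).add_const 1).sqrt (by positivity) using 1
  field_simp
  ring

theorem hasDerivAt_div_sqrt_sq_add_one (x : ℝ) :
    HasDerivAt (fun x ↦ x / √(x ^ 2 + 1)) ((x ^ 2 + 1) ^ (3 / 2 : ℝ))⁻¹ x := by
  have hpos : 0 < x ^ 2 + 1 := by positivity
  have h32 : (x ^ 2 + 1) ^ (3 / 2 : ℝ) = (x ^ 2 + 1) * √(x ^ 2 + 1) := by
    rw [sqrt_eq_rpow, ← rpow_one_add' hpos.le (by norm_num)]
    norm_num
  have hsq : √(x ^ 2 + 1) ^ 2 = x ^ 2 + 1 := sq_sqrt hpos.le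
  refine ((hasDerivAt_id' x).div (hasDerivAt_sqrt_sq_add_one x) (by positivity)).congr_deriv ?_
  rw [h32]
  field_simp
  rw [hsq]
  ring

/-- Lower bound for the symmetrized second difference of `f(x) = √(x² + 1)`. -/
theorem second_difference_lower_bound (k w : ℝ) :
    Real.sqrt ((k + w) ^ 2 + 1) + Real.sqrt ((k - w) ^ 2 + 1) - 2 * Real.sqrt (k ^ 2 + 1)
      ≥ (1 / 2) * w ^ 2 / ((|k| + |w|) ^ 2 + 1) ^ ((3 : ℝ) / 2) := by
  set M := (|k| + |w|) ^ 2 + 1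
  have hbound : ∀ x ∈ Icc (k - |w|) (k + |w|),
      (M ^ (3 / 2 : ℝ))⁻¹ ≤ ((x ^ 2 + 1) ^ (3 / 2 : ℝ))⁻¹ := by
    intro x ⟨hxl, hxr⟩
    have hsq : x ^ 2 ≤ (|k| + |w|) ^ 2 :=
      sq_le_sq' (by linarith [neg_abs_le k]) (by linarith [le_abs_self k])
    gcongr
    linarith
  have key := le_second_difference_of_le_deriv2 (fun x _ ↦ hasDerivAt_sqrt_sq_add_one x)
    (fun x _ ↦ hasDerivAt_div_sqrt_sq_add_one x) hbound
  have hnonneg : 0 ≤ w ^ 2 / M ^ (3 / 2 : ℝ) := by positivity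
  rw [inv_mul_eq_div] at key
  rw [mul_div_assoc]
  linarith
end

section
/- For all k, w ∈ ℝ with |k| > |w|, one has |2·w·sign(k) − √((k+w)² + 1) + √((k−w)² + 1)|² ≤ 4·w²·min(1, (|k| − |w|)^{−2})/((|k| − |w|)² + 1). -/
/-!
With `h x = √(x ^ 2 + 1) - x = (√(x ^ 2 + 1) + x)⁻¹`, the left-hand side is `h (k - w) - h (k + w)`
once `k > 0` (the case `k < 0` follows from the symmetry `(k, w) ↦ (-k, -w)`). Both points lie in
`[a, ∞)` with `a = |k| - |w|`, where `|h'| = 1 / (√(x ^ 2 + 1) (√(x ^ 2 + 1) + x))` is at most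
`1 / (√(a ^ 2 + 1) (√(a ^ 2 + 1) + a))`; since the points are `2 |w|` apart, squaring gives the claim
together with `(√(a ^ 2 + 1) + a)⁻² ≤ min 1 a⁻²`.
-/

open Real

lemma sqrt_sq_add_one_add_pos (x : ℝ) : 0 < √(x ^ 2 + 1) + x := by
  have : |x| < √(x ^ 2 + 1) := by
    rw [← sqrt_sq_eq_abs]; exact sqrt_lt_sqrt (sq_nonneg x) (lt_add_one _)
  linarith [neg_abs_le x]

lemma inv_sq_sqrt_sq_add_one_add_le_min {a : ℝ} (ha : 0 < a) :
    ((√(a ^ 2 + 1) + a) ^ 2)⁻¹ ≤ min 1 (a⁻¹ ^ 2) := by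
  have hS : 1 ≤ √(a ^ 2 + 1) := one_le_sqrt.2 (by nlinarith)
  rw [inv_pow]
  refine le_min (inv_le_one_of_one_le₀ (by nlinarith)) (inv_anti₀ (by positivity) ?_)
  nlinarith [sqrt_nonneg (a ^ 2 + 1)]

lemma abs_sqrt_sq_add_one_sub_sub_le {a u v : ℝ} (ha : 0 ≤ a) (hu : a ≤ u) (hv : a ≤ v) :
    |(√(u ^ 2 + 1) - u) - (√(v ^ 2 + 1) - v)|
      ≤ |u - v| / (√(a ^ 2 + 1) * (√(a ^ 2 + 1) + a)) := by
  have hSu : √(a ^ 2 + 1) ≤ √(u ^ 2 + 1) := by gcongr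
  have hSv : √(a ^ 2 + 1) ≤ √(v ^ 2 + 1) := by gcongr
  have hPu := sqrt_sq_add_one_add_pos u
  have hPv := sqrt_sq_add_one_add_pos v
  have hsq_u : √(u ^ 2 + 1) ^ 2 = u ^ 2 + 1 := sq_sqrt (by positivity)
  have hsq_v : √(v ^ 2 + 1) ^ 2 = v ^ 2 + 1 := sq_sqrt (by positivity)
  set S := √(a ^ 2 + 1)
  set Fu := √(u ^ 2 + 1)
  set Fv := √(v ^ 2 + 1)
  set D := (Fu + u) * (Fv + v) * (Fu + Fv)
  have hD : 0 < D := by positivity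
  -- `(√(x ^ 2 + 1) - x) (√(x ^ 2 + 1) + x) = 1` turns the difference of `h` into a quotient
  have key : ((Fu - u) - (Fv - v)) * D = (v - u) * ((Fu + u) + (Fv + v)) := by
    linear_combination ((Fv + v) * (Fu + Fv) - 1) * hsq_u - ((Fu + u) * (Fu + Fv) - 1) * hsq_v
  have hsum : ((Fu + u) + (Fv + v)) * (S * (S + a)) ≤ D := by
    have h1 : (Fu + u) * (S * (S + a)) ≤ (Fu + u) * (Fv * (Fv + v)) := by gcongr
    have h2 : (Fv + v) * (S * (S + a)) ≤ (Fv + v) * (Fu * (Fu + u)) := by gcongr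
    linarith
  rw [le_div_iff₀ (by positivity), ← mul_le_mul_iff_left₀ hD]
  calc |(Fu - u) - (Fv - v)| * (S * (S + a)) * D
      = |u - v| * (((Fu + u) + (Fv + v)) * (S * (S + a))) := by
        rw [mul_right_comm, ← abs_of_pos hD, ← abs_mul, key, abs_mul, abs_sub_comm,
          abs_of_pos (by positivity : 0 < (Fu + u) + (Fv + v))]
        ring
    _ ≤ |u - v| * D := by gcongr

lemma abs_two_mul_sub_sqrt_add_sqrt_le {k w : ℝ} (h : |w| < k) :
    |2 * w - √((k + w) ^ 2 + 1) + √((k - w) ^ 2 + 1)|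
      ≤ 2 * |w| / (√((k - |w|) ^ 2 + 1) * (√((k - |w|) ^ 2 + 1) + (k - |w|))) := by
  have hu : k - |w| ≤ k - w := by linarith [le_abs_self w]
  have hv : k - |w| ≤ k + w := by linarith [neg_abs_le w]
  convert abs_sqrt_sq_add_one_sub_sub_le (by linarith) hu hv using 2
  · ring
  · rw [show k - w - (k + w) = -(2 * w) by ring, abs_neg, abs_mul, abs_two]

lemma abs_two_mul_sign_sub_sqrt_add_sqrt_le {k w : ℝ} (h : |w| < |k|) :
    |2 * w * sign k - √((k + w) ^ 2 + 1) + √((k - w) ^ 2 + 1)|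
      ≤ 2 * |w| / (√((|k| - |w|) ^ 2 + 1) * (√((|k| - |w|) ^ 2 + 1) + (|k| - |w|))) := by
  rcases lt_trichotomy k 0 with hk | rfl | hk
  · rw [abs_of_neg hk] at h ⊢
    rw [sign_of_neg hk, ← abs_neg w]
    convert abs_two_mul_sub_sqrt_add_sqrt_le (k := -k) (w := -w) (by rwa [abs_neg]) using 4 <;>
      ring_nf
  · exact absurd h (by simp)
  · rw [abs_of_pos hk] at h ⊢
    rw [sign_of_pos hk, mul_one]
    exact abs_two_mul_sub_sqrt_add_sqrt_le h

/-- For `|w| < |k|`, quantitative decay of the signed difference. -/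
theorem signed_difference_decay (k w : ℝ) (h : |w| < |k|) :
    |2 * w * Real.sign k - Real.sqrt ((k + w) ^ 2 + 1) + Real.sqrt ((k - w) ^ 2 + 1)| ^ 2
      ≤ 4 * w ^ 2 * min 1 ((|k| - |w|)⁻¹ ^ 2) / ((|k| - |w|) ^ 2 + 1) := by
  set a := |k| - |w|
  have ha : 0 < a := sub_pos.2 h
  have hS : √(a ^ 2 + 1) ^ 2 = a ^ 2 + 1 := sq_sqrt (by positivity)
  calc _ ≤ (2 * |w| / (√(a ^ 2 + 1) * (√(a ^ 2 + 1) + a))) ^ 2 :=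
        pow_le_pow_left₀ (abs_nonneg _) (abs_two_mul_sign_sub_sqrt_add_sqrt_le h) 2
    _ = 4 * w ^ 2 * ((√(a ^ 2 + 1) + a) ^ 2)⁻¹ / (a ^ 2 + 1) := by
        rw [div_pow, mul_pow, mul_pow, hS, sq_abs]; field_simp; ring
    _ ≤ _ := by gcongr; exact inv_sq_sqrt_sq_add_one_add_le_min ha
end

section
/- Let V̄ ≥ 0, let V : ℝ → ℝ be differentiable with 0 ≤ V(x) ≤ V̄ for all x, and let x, k : ℝ → ℝ be differentiable functions satisfying the Hamiltonian equations x'(t) = k(t) and k'(t) = −V'(x(t)) for all t ∈ ℝ. If k(0)² > 4·V̄, then for all t, s ∈ ℝ one has |k(t) − k(0)| ≤ 2·V̄/|k(0)| and |k(t) − k(s)| ≤ 4·V̄/|k(0)|. -/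
/-! Along the flow the energy `k² / 2 + V(x)` is conserved, so `|k(t)² - k(0)²| ≤ 2 V̄`. Since
`k(0)² > 4 V̄`, this keeps `k(t)² > 2 V̄`, so `k` never vanishes and, being continuous, keeps the
sign of `k(0)`. Then `|k(t) + k(0)| ≥ |k(0)|`, and factoring `k(t)² - k(0)²` gives
`|k(t) - k(0)| ≤ 2 V̄ / |k(0)|`; the second bound is the triangle inequality. -/

theorem hamiltonian_energy_eq {V V' x k : ℝ → ℝ} (hV : ∀ y, HasDerivAt V (V' y) y)
    (hx : ∀ t, HasDerivAt x (k t) t) (hk : ∀ t, HasDerivAt k (-(V' (x t))) t) (t s : ℝ) :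
    k t ^ 2 / 2 + V (x t) = k s ^ 2 / 2 + V (x s) := by
  have hE : ∀ u, HasDerivAt (fun u => k u ^ 2 / 2 + V (x u)) 0 u := fun u => by
    refine ((((hk u).pow 2).div_const 2).add ((hV (x u)).comp u (hx u))).congr_deriv ?_
    ring
  exact is_const_of_deriv_eq_zero (fun u => (hE u).differentiableAt) (fun u => (hE u).deriv) t s

theorem abs_sq_sub_sq_le_of_energy_eq {a b p q M : ℝ} (h : a ^ 2 / 2 + p = b ^ 2 / 2 + q)
    (hp₀ : 0 ≤ p) (hpM : p ≤ M) (hq₀ : 0 ≤ q) (hqM : q ≤ M) :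
    |a ^ 2 - b ^ 2| ≤ 2 * M := by
  rw [abs_le]
  constructor <;> linarith

theorem Continuous.mul_pos_of_ne_zero {f : ℝ → ℝ} (hf : Continuous f) (hne : ∀ t, f t ≠ 0)
    (t s : ℝ) : 0 < f t * f s := by
  by_contra! h
  have hzero : (0 : ℝ) ∈ Set.uIcc (f t) (f s) := by
    rcases mul_nonpos_iff.mp h with ⟨ht, hs⟩ | ⟨ht, hs⟩
    · exact Set.mem_uIcc.mpr (Or.inr ⟨hs, ht⟩)
    · exact Set.mem_uIcc.mpr (Or.inl ⟨ht, hs⟩)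
  obtain ⟨c, -, hc⟩ := intermediate_value_uIcc hf.continuousOn hzero
  exact hne c hc

theorem abs_sub_le_div_abs_of_mul_pos {a b c : ℝ} (hab : 0 < a * b)
    (h : |a ^ 2 - b ^ 2| ≤ c) : |a - b| ≤ c / |b| := by
  have hb : 0 < |b| := abs_pos.mpr (right_ne_zero_of_mul hab.ne')
  have hsum : |b| ≤ |a + b| := by
    rcases lt_or_gt_of_ne (right_ne_zero_of_mul hab.ne') with hb' | hb'
    · rw [abs_of_neg hb', abs_of_neg (by nlinarith)]
      nlinarith
    · rw [abs_of_pos hb', abs_of_pos (by nlinarith)]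
      nlinarith
  rw [le_div_iff₀ hb]
  calc |a - b| * |b| ≤ |a - b| * |a + b| := mul_le_mul_of_nonneg_left hsum (abs_nonneg _)
    _ = |a ^ 2 - b ^ 2| := by rw [← abs_mul]; ring_nf
    _ ≤ c := h

theorem momentum_stability_general (Vbar : ℝ)
    (V V' : ℝ → ℝ) (hV : ∀ y, HasDerivAt V (V' y) y)
    (hV0 : ∀ y, 0 ≤ V y) (hV1 : ∀ y, V y ≤ Vbar)
    (x k : ℝ → ℝ)
    (hx : ∀ t, HasDerivAt x (k t) t)
    (hk : ∀ t, HasDerivAt k (-(V' (x t))) t)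
    (h0 : 4 * Vbar < (k 0) ^ 2) :
    ∀ t s : ℝ, |k t - k 0| ≤ 2 * Vbar / |k 0| ∧ |k t - k s| ≤ 4 * Vbar / |k 0| := by
  have hsq : ∀ t, |k t ^ 2 - k 0 ^ 2| ≤ 2 * Vbar := fun t =>
    abs_sq_sub_sq_le_of_energy_eq (hamiltonian_energy_eq hV hx hk t 0)
      (hV0 _) (hV1 _) (hV0 _) (hV1 _)
  have hne : ∀ t, k t ≠ 0 := fun t hkt => by
    have := (abs_le.mp (hsq t)).1
    rw [hkt] at this
    nlinarith
  have hk_cont : Continuous k := continuous_iff_continuousAt.mpr fun t => (hk t).continuousAt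
  have hbound : ∀ t, |k t - k 0| ≤ 2 * Vbar / |k 0| := fun t =>
    abs_sub_le_div_abs_of_mul_pos (hk_cont.mul_pos_of_ne_zero hne t 0) (hsq t)
  intro t s
  refine ⟨hbound t, ?_⟩
  calc |k t - k s| ≤ |k t - k 0| + |k s - k 0| := by
        rw [abs_sub_comm (k s)]
        exact abs_sub_le _ _ _
    _ ≤ 2 * Vbar / |k 0| + 2 * Vbar / |k 0| := add_le_add (hbound t) (hbound s)
    _ = 4 * Vbar / |k 0| := by ring

/-- Stability of the momentum along the Hamiltonian flow `H(x,k) = ½k² + V(x)` when the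
initial kinetic energy dominates the (nonnegative, bounded) potential. -/
theorem momentum_stability (Vbar : ℝ) (hVbar : 0 ≤ Vbar)
    (V V' : ℝ → ℝ) (hV : ∀ y, HasDerivAt V (V' y) y)
    (hV0 : ∀ y, 0 ≤ V y) (hV1 : ∀ y, V y ≤ Vbar)
    (x k : ℝ → ℝ)
    (hx : ∀ t, HasDerivAt x (k t) t)
    (hk : ∀ t, HasDerivAt k (-(V' (x t))) t)
    (h0 : 4 * Vbar < (k 0) ^ 2) :
    ∀ t s : ℝ, |k t - k 0| ≤ 2 * Vbar / |k 0| ∧ |k t - k s| ≤ 4 * Vbar / |k 0| :=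
  momentum_stability_general Vbar V V' hV hV0 hV1 x k hx hk h0
end
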